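/- Let P_{Y|X} be a channel with binary input X ∈ {0,1} and finite output alphabet 𝒴 = {y₁,…,yₙ}, with rows p_i = P_{Y|X}(y_i|0) and q_i = P_{Y|X}(y_i|1), Σ_i p_i = Σ_i q_i = 1. Let I = {i : p_i ≤ q_i}, p̄ = Σ_{i∉I} p_i, and q̄ = Σ_{i∈I} q_i. Then the min-entropy-based maximal leakage satisfies ML(P_{Y|X}) = log₂ Σ_i max(p_i, q_i) = log₂(p̄ + q̄). Moreover, for the binary-output channel P_{Ȳ|X} obtained by the quantization Ȳ = 1 if Y ∈ I and Ȳ = 0 otherwise (so P_{Ȳ|X}(0|0) = p̄, P_{Ȳ|X}(1|0) = 1 − p̄, P_{Ȳ|X}(1|1) = q̄, P_{Ȳ|X}(0|1) = 1 − q̄), one has ML(P_{Ȳ|X}) = log₂(p̄ + q̄) = ML(P_{Y|X}). -/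
import Mathlib


open Real
open scoped BigOperators

/-- The min-entropy leakage `H_∞(X) − H_∞(X|Y)` of a channel `Q` with binary input
`X ∈ {0,1}` under the input distribution `PX`, where
`H_∞(X) = −log₂ max_x PX(x)` and `H_∞(X|Y) = −log₂ Σ_y max_x PX(x)·Q(y|x)`. -/
noncomputable def minEntLeakage {𝒴 : Type*} [Fintype 𝒴]
    (PX : Bool → ℝ) (Q : Bool → 𝒴 → ℝ) : ℝ :=
  logb 2 (∑ y, max (PX false * Q false y) (PX true * Q true y)) -
    logb 2 (max (PX false) (PX true))

lemma key {𝒴 : Type*} [Fintype 𝒴] (P0 P1 : 𝒴 → ℝ)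
    (h00 : ∀ y, 0 ≤ P0 y) (h10 : ∀ y, 0 ≤ P1 y)
    (h01 : ∑ y, P0 y = 1) (h11 : ∑ y, P1 y = 1) :
    IsGreatest
      {r : ℝ | ∃ PX : Bool → ℝ, (∀ b, 0 ≤ PX b) ∧ PX false + PX true = 1 ∧
        r = minEntLeakage PX (fun x y => if x then P1 y else P0 y)}
      (logb 2 (∑ y, max (P0 y) (P1 y))) := by
  set S := ∑ y, max (P0 y) (P1 y) with hS
  have hS1 : (1:ℝ) ≤ S := by
    rw [← h01]; exact Finset.sum_le_sum fun y _ => le_max_left _ _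
  have hSpos : 0 < S := lt_of_lt_of_le one_pos hS1
  constructor
  · refine ⟨fun _ => 1/2, fun _ => by norm_num, by norm_num, ?_⟩
    have hms : minEntLeakage (fun _ => (1:ℝ)/2) (fun x y => if x then P1 y else P0 y)
        = logb 2 ((1/2) * S) - logb 2 (1/2) := by
      have hs2 : (∑ y, max ((1/2:ℝ) * P0 y) ((1/2:ℝ) * P1 y)) = (1/2) * S := by
        rw [hS, Finset.mul_sum]
        refine Finset.sum_congr rfl fun y _ => ?_
        rw [mul_max_of_nonneg _ _ (by norm_num : (0:ℝ) ≤ 1/2)]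
      simp only [minEntLeakage, max_self]
      rw [← hs2]
      norm_num
    rw [hms, logb_mul (by norm_num) (ne_of_gt hSpos)]
    ring
  · rintro r ⟨PX, hPX0, hPXs, rfl⟩
    set a := PX false with ha
    set b := PX true with hb
    have hM : (0:ℝ) < max a b := by
      rcases le_or_gt a b with h | h
      · have : 0 < b := by nlinarith [hPX0 false, hPX0 true]
        exact lt_of_lt_of_le this (le_max_right _ _)
      · have : 0 < a := by nlinarith [hPX0 false, hPX0 true]
        exact lt_of_lt_of_le this (le_max_left _ _)
    have hTdef : minEntLeakage PX (fun x y => if x then P1 y else P0 y)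
        = logb 2 (∑ y, max (a * P0 y) (b * P1 y)) - logb 2 (max a b) := by
      simp [minEntLeakage, ha, hb]
    set T := ∑ y, max (a * P0 y) (b * P1 y) with hT
    have hTa : a ≤ T := by
      calc a = ∑ y, a * P0 y := by rw [← Finset.mul_sum, h01, mul_one]
      _ ≤ T := Finset.sum_le_sum fun y _ => le_max_left _ _
    have hTb : b ≤ T := by
      calc b = ∑ y, b * P1 y := by rw [← Finset.mul_sum, h11, mul_one]
      _ ≤ T := Finset.sum_le_sum fun y _ => le_max_right _ _
    have hTpos : 0 < T := lt_of_lt_of_le hM (max_le hTa hTb)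
    have hTle : T ≤ max a b * S := by
      rw [hT, hS, Finset.mul_sum]
      refine Finset.sum_le_sum fun y _ => ?_
      rw [mul_max_of_nonneg _ _ hM.le]
      exact max_le_max (mul_le_mul_of_nonneg_right (le_max_left _ _) (h00 y))
        (mul_le_mul_of_nonneg_right (le_max_right _ _) (h10 y))
    have hlog : logb 2 T ≤ logb 2 (max a b) + logb 2 S := by
      rw [← logb_mul (ne_of_gt hM) (ne_of_gt hSpos)]
      exact Real.logb_le_logb_of_le (by norm_num) hTpos hTle
    rw [hTdef]
    linarith


open Classical in
/-- For a channel with binary input and finite output alphabet with rows `p` and `q`,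
letting `I = {i : p_i ≤ q_i}`, `p̄ = Σ_{i∉I} p_i` and `q̄ = Σ_{i∈I} q_i`, the
min-entropy-based maximal leakage equals `log₂ Σ_i max(p_i, q_i) = log₂(p̄ + q̄)`
(the maximum over input distributions is attained), and the binary-output channel
obtained by the quantization `Ȳ = 1_{Y ∈ I}` has the same maximal leakage. -/
theorem maximal_leakage_eq_quantized (m : ℕ) (p q : Fin m → ℝ)
    (hp0 : ∀ i, 0 ≤ p i) (hq0 : ∀ i, 0 ≤ q i)
    (hp1 : ∑ i, p i = 1) (hq1 : ∑ i, q i = 1) :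
    (∑ i, max (p i) (q i)) =
        (∑ i ∈ Finset.univ.filter fun i => ¬p i ≤ q i, p i) +
          (∑ i ∈ Finset.univ.filter fun i => p i ≤ q i, q i) ∧
    IsGreatest
        {r : ℝ | ∃ PX : Bool → ℝ, (∀ b, 0 ≤ PX b) ∧ PX false + PX true = 1 ∧
          r = minEntLeakage PX (fun x i => if x then q i else p i)}
        (logb 2 ((∑ i ∈ Finset.univ.filter fun i => ¬p i ≤ q i, p i) +
          (∑ i ∈ Finset.univ.filter fun i => p i ≤ q i, q i))) ∧
    IsGreatest
        {r : ℝ | ∃ PX : Bool → ℝ, (∀ b, 0 ≤ PX b) ∧ PX false + PX true = 1 ∧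
          r = minEntLeakage PX (fun x yb =>
            if x then
              (if yb then (∑ i ∈ Finset.univ.filter fun i => p i ≤ q i, q i)
               else 1 - ∑ i ∈ Finset.univ.filter fun i => p i ≤ q i, q i)
            else
              (if yb then 1 - ∑ i ∈ Finset.univ.filter fun i => ¬p i ≤ q i, p i
               else ∑ i ∈ Finset.univ.filter fun i => ¬p i ≤ q i, p i))}
        (logb 2 ((∑ i ∈ Finset.univ.filter fun i => ¬p i ≤ q i, p i) +
          (∑ i ∈ Finset.univ.filter fun i => p i ≤ q i, q i))) := by
  set Pb := ∑ i ∈ Finset.univ.filter (fun i => ¬p i ≤ q i), p i with hPb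
  set Qb := ∑ i ∈ Finset.univ.filter (fun i => p i ≤ q i), q i with hQb
  have h1 : (∑ i, max (p i) (q i)) = Pb + Qb := by
    rw [hPb, hQb, Finset.sum_filter, Finset.sum_filter, ← Finset.sum_add_distrib]
    refine Finset.sum_congr rfl fun i _ => ?_
    by_cases h : p i ≤ q i
    · simp [h, max_eq_right h]
    · simp [h, max_eq_left (le_of_not_ge h)]
  refine ⟨h1, ?_, ?_⟩
  · have h2 := key p q hp0 hq0 hp1 hq1
    rwa [h1] at h2
  · -- facts
    have hsplit_p : (∑ i ∈ Finset.univ.filter (fun i => p i ≤ q i), p i) + Pb = 1 := by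
      rw [hPb]
      rw [Finset.sum_filter_add_sum_filter_not]
      exact hp1
    have hsplit_q : Qb + (∑ i ∈ Finset.univ.filter (fun i => ¬p i ≤ q i), q i) = 1 := by
      rw [hQb]
      rw [Finset.sum_filter_add_sum_filter_not]
      exact hq1
    have hA : 1 - Pb ≤ Qb := by
      have : (∑ i ∈ Finset.univ.filter (fun i => p i ≤ q i), p i) ≤ Qb := by
        rw [hQb]
        exact Finset.sum_le_sum fun i hi => (Finset.mem_filter.mp hi).2
      linarith
    have hB : 1 - Qb ≤ Pb := by
      have : (∑ i ∈ Finset.univ.filter (fun i => ¬p i ≤ q i), q i) ≤ Pb := by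
        rw [hPb]
        exact Finset.sum_le_sum fun i hi =>
          le_of_not_ge (Finset.mem_filter.mp hi).2
      linarith
    have hPb0 : 0 ≤ Pb := Finset.sum_nonneg fun i _ => hp0 i
    have hQb0 : 0 ≤ Qb := Finset.sum_nonneg fun i _ => hq0 i
    have hPb1 : Pb ≤ 1 := by
      have : (0:ℝ) ≤ ∑ i ∈ Finset.univ.filter (fun i => p i ≤ q i), p i :=
        Finset.sum_nonneg fun i _ => hp0 i
      linarith
    have hQb1 : Qb ≤ 1 := by
      have : (0:ℝ) ≤ ∑ i ∈ Finset.univ.filter (fun i => ¬p i ≤ q i), q i :=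
        Finset.sum_nonneg fun i _ => hq0 i
      linarith
    have sumProp : ∀ f : Prop → ℝ, (∑ y : Prop, f y) = f True + f False := by
      intro f
      rw [Fintype.univ_Prop, Finset.sum_pair (by simp : (True:Prop) ≠ False)]
    have h3 := key (𝒴 := Prop) (fun yb : Prop => if yb then 1 - Pb else Pb)
      (fun yb : Prop => if yb then Qb else 1 - Qb)
      (fun yb => by by_cases h : yb <;> simp [h] <;> linarith)
      (fun yb => by by_cases h : yb <;> simp [h] <;> linarith)
      (by rw [sumProp]; simp)
      (by rw [sumProp]; simp)
    have hval : (∑ yb : Prop, max ((fun yb : Prop => if yb then 1 - Pb else Pb) yb)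
        ((fun yb : Prop => if yb then Qb else 1 - Qb) yb)) = Pb + Qb := by
      rw [sumProp]
      simp only [if_pos trivial, if_neg (by simp : ¬False), if_true, if_false]
      rw [max_eq_right hA, max_eq_left hB]
      ring
    rw [hval] at h3
    exact h3
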